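/- Let Y = (Y_1, Y_2, Y_3, Y_4) be an abstract scrambled (0,2,3)-net in base 2. Then for every ε > 0 there exists a set D ∈ D^3_0 (a difference of two anchored boxes in [0,1)^3) with P(Y_1 ∈ D, Y_2 ∈ D, Y_3 ∈ D) / ∏_{i=1}^3 P(Y_i ∈ D) ≥ (4/3)^3 − ε. In particular, the D^3_0-correlation number satisfies γ_{D^3_0}(Y) ≥ (4/3)^3 = 64/27. -/

import Mathlib

/-!
Write `D = [0, 1/2 + δ)³ \ [0, 1/2)³`, of volume `λ(D) = (3δ/4)(1 + O(δ))`.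

Property (iii) says that, conditionally on the grid cells of side `1/4` containing the points,
the points are independent and uniform in their cells. Applied to a set `A` and to `Aᶜ` it bounds
`P(Y n ∈ A) + P(Y n ∉ A)` by `1`, so every event `{Y n ∈ A}` is null-measurable although `Y` is
not assumed measurable; the conditional statement then holds with equalities of honest measures.
In particular `P(Y n ∈ D) ≤ λ(D)`.

With probability `1/64` the point `Y 3` lies in the corner cell `[3/4, 1)³`. The net property
then forces each of `Y 0, Y 1, Y 2` into a cell with exactly one coordinate in `[1/2, 3/4)` and the
others in `[0, 1/2)`: each coordinate has its four quarters occupied by the four points, and no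
two points share the upper half in two coordinates. Such a cell meets `D` in a `4δ` fraction of
its volume, so `P(Y 0, Y 1, Y 2 ∈ D) ≥ (4δ)³ / 64 = δ³`, and the ratio is at least
`δ³ / λ(D)³ → (4/3)³` as `δ → 0`.
-/

open MeasureTheory ProbabilityTheory Filter
open scoped ENNReal Classical

namespace LHSPaper

/-- The anchored box `[0,a) = ∏_i [0, a_i)` in `[0,1)^d`. -/
def anchoredBox {d : ℕ} (a : Fin d → ℝ) : Set (Fin d → ℝ) := {x | ∀ i, x i ∈ Set.Ico 0 (a i)}

/-- `C^d_0`, the collection of anchored boxes `[0,a)` with `a ∈ [0,1]^d`. -/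
def anchoredBoxes (d : ℕ) : Set (Set (Fin d → ℝ)) :=
  {S | ∃ a : Fin d → ℝ, (∀ i, a i ∈ Set.Icc (0 : ℝ) 1) ∧ S = anchoredBox a}

/-- `D^d_0`, the collection of differences `B \ A` of anchored boxes. -/
def boxDiffs (d : ℕ) : Set (Set (Fin d → ℝ)) :=
  {S | ∃ A ∈ anchoredBoxes d, ∃ B ∈ anchoredBoxes d, S = B \ A}

/-- The half-open unit cube `[0,1)^d`. -/
def unitCube (d : ℕ) : Set (Fin d → ℝ) := {x | ∀ i, x i ∈ Set.Ico (0 : ℝ) 1}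

/-- `γ`-negative dependence of the indicators of the events `A 1, …, A N`. -/
def GammaNegDep {Ω : Type*} [MeasurableSpace Ω] (μ : Measure Ω) {N : ℕ}
    (γ : ℝ≥0∞) (A : Fin N → Set Ω) : Prop :=
  ∀ J : Finset (Fin N), J.Nonempty →
    μ (⋂ j ∈ J, A j) ≤ γ * ∏ j ∈ J, μ (A j) ∧
    μ (⋂ j ∈ J, (A j)ᶜ) ≤ γ * ∏ j ∈ J, μ (A j)ᶜ

/-- The `𝒮`-correlation number of a random point tuple `X`. -/
noncomputable def corrNum {Ω : Type*} [MeasurableSpace Ω] (μ : Measure Ω) {N d : ℕ}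
    (𝒮 : Set (Set (Fin d → ℝ))) (X : Fin N → Ω → Fin d → ℝ) : ℝ≥0∞ :=
  ⨆ (S : Set (Fin d → ℝ)) (_ : S ∈ 𝒮) (J : Finset (Fin N)) (_ : J.Nonempty),
    max (μ (⋂ j ∈ J, {ω | X j ω ∈ S}) / ∏ j ∈ J, μ {ω | X j ω ∈ S})
        (μ (⋂ j ∈ J, {ω | X j ω ∉ S}) / ∏ j ∈ J, μ {ω | X j ω ∉ S})

instance (N : ℕ) : MeasurableSpace (Equiv.Perm (Fin N)) := ⊤

instance (N : ℕ) : Nonempty (Equiv.Perm (Fin N)) := ⟨Equiv.refl _⟩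

/-- Value types of the sources of randomness of a Latin hypercube sample:
`d` random permutations and `N·d` random reals. -/
def lhsβ (d N : ℕ) : (Fin d ⊕ (Fin N × Fin d)) → Type :=
  fun i => Sum.elim (fun _ => Equiv.Perm (Fin N)) (fun _ => ℝ) i

noncomputable def lhsMS (d N : ℕ) : (i : Fin d ⊕ (Fin N × Fin d)) → MeasurableSpace (lhsβ d N i) :=
  fun i => match i with
  | .inl _ => ⊤
  | .inr _ => inferInstanceAs (MeasurableSpace ℝ)

def lhsFun {Ω : Type*} {d N : ℕ} (π : Fin d → Ω → Equiv.Perm (Fin N))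
    (U : Fin N → Ω → Fin d → ℝ) : (i : Fin d ⊕ (Fin N × Fin d)) → Ω → lhsβ d N i :=
  fun i => match i with
  | .inl j => π j
  | .inr p => fun ω => U p.1 ω p.2

/-- `X` is a Latin hypercube sample of `N` points in `[0,1)^d`, built from the
uniformly distributed random permutations `π_j` and the uniformly distributed
random variables `U_{n,j}`, all mutually independent. -/
def IsLHS {Ω : Type*} [MeasurableSpace Ω] (μ : Measure Ω) (d N : ℕ)
    (X : Fin N → Ω → Fin d → ℝ)
    (π : Fin d → Ω → Equiv.Perm (Fin N)) (U : Fin N → Ω → Fin d → ℝ) : Prop :=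
  (∀ j, Measure.map (π j) μ = (PMF.uniformOfFintype (Equiv.Perm (Fin N))).toMeasure) ∧
  (∀ n j, Measure.map (fun ω => U n ω j) μ = volume.restrict (Set.Ico (0 : ℝ) 1)) ∧
  iIndepFun (m := lhsMS d N) (lhsFun π U) μ ∧
  (∀ n j ω, X n ω j = (((π j ω) n : ℕ) + U n ω j) / N)

/-- An elementary interval in base `b` of order `k` in `[0,1)^d`. -/
def IsElemInterval (b d k : ℕ) (E : Set (Fin d → ℝ)) : Prop :=
  ∃ ℓ : Fin d → ℕ, ∃ a : Fin d → ℕ, (∀ i, a i < b ^ ℓ i) ∧ (∑ i, ℓ i = k) ∧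
    E = {x | ∀ i, x i ∈ Set.Ico ((a i : ℝ) / b ^ ℓ i) (((a i : ℝ) + 1) / b ^ ℓ i)}

/-- A `(t,m,d)`-net in base `b`: `b^m` points in `[0,1)^d` such that every elementary
interval of order `m - t` contains exactly `b^t` points (with multiplicity). -/
def IsNet (b d m t : ℕ) (P : Fin (b ^ m) → Fin d → ℝ) : Prop :=
  (∀ n, P n ∈ unitCube d) ∧
  ∀ E : Set (Fin d → ℝ), IsElemInterval b d (m - t) E →
    (Finset.univ.filter fun n => P n ∈ E).card = b ^ t

/-- A `b`-ary scrambling of depth `ℓ`: a self-map of `[0,1)` mapping, for each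
`k ∈ {1,…,ℓ}`, elementary intervals of order `k` into elementary intervals of order `k`,
distinct ones into distinct ones. -/
def IsScrambling (b ℓ : ℕ) (σ : ℝ → ℝ) : Prop :=
  (∀ x ∈ Set.Ico (0 : ℝ) 1, σ x ∈ Set.Ico (0 : ℝ) 1) ∧
  ∀ k, 1 ≤ k → k ≤ ℓ → ∃ f : ℕ → ℕ,
    (∀ a < b ^ k, f a < b ^ k) ∧
    (∀ a < b ^ k, ∀ a' < b ^ k, a ≠ a' → f a ≠ f a') ∧
    (∀ a < b ^ k, ∀ x ∈ Set.Ico ((a : ℝ) / b ^ k) (((a : ℝ) + 1) / b ^ k),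
      σ x ∈ Set.Ico ((f a : ℝ) / b ^ k) (((f a : ℝ) + 1) / b ^ k))

/-- A basic cube of an abstract scrambled `(t,m,d)`-net in base `b`. -/
def IsBasicCube (b d m t : ℕ) (C : Set (Fin d → ℝ)) : Prop :=
  ∃ k : Fin d → ℕ, (∀ j, k j < b ^ (m - t)) ∧
    C = {x | ∀ j, x j ∈ Set.Ico ((k j : ℝ) / b ^ (m - t)) (((k j : ℝ) + 1) / b ^ (m - t))}

/-- An abstract scrambled `(t,m,d)`-net in base `b`. -/
def IsAbstractScrambledNet {Ω : Type*} [MeasurableSpace Ω] (μ : Measure Ω)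
    (b d m t : ℕ) (Y : Fin (b ^ m) → Ω → (Fin d → ℝ)) : Prop :=
  (∀ᵐ ω ∂μ, IsNet b d m t fun n => Y n ω) ∧
  (∀ i C, IsBasicCube b d m t C → μ {ω | Y i ω ∈ C} = ((b : ℝ≥0∞) ^ (d * (m - t)))⁻¹) ∧
  (∀ M : Set (Fin d → ℝ), MeasurableSet M →
    ∀ J : Finset (Fin (b ^ m)), J.Nonempty →
    ∀ C : Fin (b ^ m) → Set (Fin d → ℝ), (∀ j ∈ J, IsBasicCube b d m t (C j)) →
      μ (⋂ j ∈ J, {ω | Y j ω ∈ C j}) ≠ 0 →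
      (μ[|⋂ j ∈ J, {ω | Y j ω ∈ C j}]) (⋂ j ∈ J, {ω | Y j ω ∈ M}) =
        ∏ j ∈ J, volume (M ∩ C j) / volume (C j))

open Set

section MeasureLemmas

variable {Ω : Type*} [MeasurableSpace Ω] {μ : Measure Ω}

theorem nullMeasurableSet_of_measure_add_measure_compl_le [IsFiniteMeasure μ] {s : Set Ω}
    (h : μ s + μ sᶜ ≤ μ univ) : NullMeasurableSet s μ := by
  -- The measurable hulls of `s` and `sᶜ` cover `univ`, so by `h` they overlap in a null set.
  set H := toMeasurable μ s
  set H' := toMeasurable μ sᶜ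
  have hHm : MeasurableSet H := measurableSet_toMeasurable μ s
  have hcover : H ∪ H' = univ :=
    eq_univ_of_forall fun ω => by
      by_cases hω : ω ∈ s
      · exact Or.inl (subset_toMeasurable μ s hω)
      · exact Or.inr (subset_toMeasurable μ sᶜ hω)
  have hnull : μ (H ∩ H') = 0 := by
    have key := measure_union_add_inter (μ := μ) H (measurableSet_toMeasurable μ sᶜ)
    rw [hcover, measure_toMeasurable, measure_toMeasurable] at key
    have : μ univ + μ (H ∩ H') ≤ μ univ + 0 := by rw [key, add_zero]; exact h
    exact nonpos_iff_eq_zero.1 ((ENNReal.add_le_add_iff_left (measure_ne_top μ _)).1 this)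
  refine hHm.nullMeasurableSet.congr (ae_eq_set.2 ⟨measure_mono_null ?_ hnull, ?_⟩)
  · exact fun ω hω => ⟨hω.1, subset_toMeasurable μ sᶜ hω.2⟩
  · rw [sdiff_eq_empty.2 (subset_toMeasurable μ s), measure_empty]

theorem measure_inter_le_mul_cond [IsFiniteMeasure μ] (s t : Set Ω) :
    μ (s ∩ t) ≤ μ s * μ[t|s] := by
  by_cases hs : μ s = 0
  · rw [measure_mono_null inter_subset_left hs, hs, zero_mul]
  rw [ProbabilityTheory.cond, Measure.smul_apply, smul_eq_mul,
    ENNReal.mul_inv_cancel_left hs (measure_ne_top μ s), inter_comm]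
  exact Measure.le_restrict_apply s t

theorem measure_inter_eq_mul_cond₀ [IsFiniteMeasure μ] {s : Set Ω} (hs : NullMeasurableSet s μ)
    (t : Set Ω) : μ (s ∩ t) = μ s * μ[t|s] := by
  by_cases hs0 : μ s = 0
  · rw [measure_mono_null inter_subset_left hs0, hs0, zero_mul]
  rw [ProbabilityTheory.cond, Measure.smul_apply, smul_eq_mul,
    ENNReal.mul_inv_cancel_left hs0 (measure_ne_top μ s), inter_comm,
    Measure.restrict_apply₀' hs]

end MeasureLemmas

def gridCell (q : ℕ) {d : ℕ} (K : Fin d → Fin q) : Set (Fin d → ℝ) :=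
  {x | ∀ j, x j ∈ Ico ((K j : ℝ) / q) (((K j : ℝ) + 1) / q)}

section GridCell

variable {q d : ℕ}

theorem gridCell_eq_pi (K : Fin d → Fin q) :
    gridCell q K = univ.pi fun j => Ico ((K j : ℝ) / q) (((K j : ℝ) + 1) / q) := by
  ext x; simp [gridCell]

theorem measurableSet_gridCell (K : Fin d → Fin q) : MeasurableSet (gridCell q K) := by
  rw [gridCell_eq_pi]; exact .univ_pi fun _ => measurableSet_Ico

theorem volume_gridCell (K : Fin d → Fin q) : volume (gridCell q K) = ((q : ℝ≥0∞) ^ d)⁻¹ := by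
  rcases eq_or_ne q 0 with rfl | hq
  · obtain rfl : d = 0 := Nat.eq_zero_of_not_pos fun hd => (K ⟨0, hd⟩).elim0
    rw [show gridCell 0 K = univ.pi fun _ => univ by ext x; simp [gridCell], volume_pi_pi]
    simp
  rw [gridCell_eq_pi, volume_pi_pi]
  simp only [Real.volume_Ico, ← sub_div, add_sub_cancel_left, Finset.prod_const,
    Finset.card_univ, Fintype.card_fin]
  rw [ENNReal.ofReal_div_of_pos (by positivity), ENNReal.ofReal_one, ENNReal.ofReal_natCast,
    one_div, ENNReal.inv_pow]

theorem eq_of_mem_gridCell {x : Fin d → ℝ} {K K' : Fin d → Fin q} (h : x ∈ gridCell q K)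
    (h' : x ∈ gridCell q K') : K = K' := by
  funext j
  have hq : (0 : ℝ) < q := by have := (K j).pos; positivity
  obtain ⟨h1, h2⟩ := h j
  obtain ⟨h1', h2'⟩ := h' j
  rw [div_le_iff₀ hq] at h1 h1'
  rw [lt_div_iff₀ hq] at h2 h2'
  have : (K j : ℕ) < K' j + 1 := by exact_mod_cast (show (K j : ℝ) < K' j + 1 by linarith)
  have : (K' j : ℕ) < K j + 1 := by exact_mod_cast (show (K' j : ℝ) < K j + 1 by linarith)
  exact Fin.ext (by omega)

theorem disjoint_gridCell {K K' : Fin d → Fin q} (h : K ≠ K') :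
    Disjoint (gridCell q K) (gridCell q K') :=
  disjoint_left.2 fun _ hx hx' => h (eq_of_mem_gridCell hx hx')

theorem exists_mem_gridCell (hq : q ≠ 0) {x : Fin d → ℝ} (hx : x ∈ unitCube d) :
    ∃ K, x ∈ gridCell q K := by
  have hq' : (0 : ℝ) < q := by positivity
  have hlt : ∀ j, ⌊q * x j⌋₊ < q := fun j =>
    (Nat.floor_lt (by nlinarith [(hx j).1])).2 (by nlinarith [(hx j).2])
  refine ⟨fun j => ⟨⌊q * x j⌋₊, hlt j⟩, fun j => ⟨?_, ?_⟩⟩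
  · rw [div_le_iff₀ hq', mul_comm]; exact Nat.floor_le (by nlinarith [(hx j).1])
  · rw [lt_div_iff₀ hq', mul_comm]; exact Nat.lt_floor_add_one _

theorem gridCell_subset_unitCube (K : Fin d → Fin q) : gridCell q K ⊆ unitCube d := by
  intro x hx j
  have hq : (0 : ℝ) < q := by have := (K j).pos; positivity
  have hK : (K j : ℝ) + 1 ≤ q := by exact_mod_cast (K j).isLt
  obtain ⟨h1, h2⟩ := hx j
  exact ⟨le_trans (by positivity) h1, h2.trans_le ((div_le_one hq).2 hK)⟩

theorem iUnion_gridCell (hq : q ≠ 0) : ⋃ K, gridCell q K = unitCube d :=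
  Subset.antisymm (iUnion_subset gridCell_subset_unitCube) fun _ hx =>
    mem_iUnion.2 (exists_mem_gridCell hq hx)

theorem sum_volume_inter_gridCell (hq : q ≠ 0) {A : Set (Fin d → ℝ)} (hA : MeasurableSet A) :
    ∑ K, volume (A ∩ gridCell q K) = volume (A ∩ unitCube d) := by
  rw [← measure_biUnion_finset
    (fun K _ K' _ h => ((disjoint_gridCell h).inter_left' A).inter_right' A)
    fun K _ => hA.inter (measurableSet_gridCell K)]
  simp only [Finset.mem_univ, iUnion_true, ← inter_iUnion, iUnion_gridCell hq]

theorem volume_unitCube : volume (unitCube d) = 1 := by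
  rw [show unitCube d = univ.pi fun _ => Ico 0 1 by ext x; simp [unitCube], volume_pi_pi]
  simp

theorem isBasicCube_gridCell {b m t : ℕ} (K : Fin d → Fin (b ^ (m - t))) :
    IsBasicCube b d m t (gridCell (b ^ (m - t)) K) :=
  ⟨fun j => K j, fun j => (K j).isLt, by simp [gridCell]⟩

theorem volume_gridCell_ne_top (K : Fin d → Fin q) : volume (gridCell q K) ≠ ⊤ :=
  ne_top_of_le_ne_top (by rw [volume_unitCube]; exact ENNReal.one_ne_top)
    (measure_mono (gridCell_subset_unitCube K))

end GridCell

namespace IsAbstractScrambledNet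

variable {Ω : Type*} [MeasurableSpace Ω] {μ : Measure Ω} {b d m t : ℕ}
  {Y : Fin (b ^ m) → Ω → Fin d → ℝ}

theorem ae_mem_unitCube (hY : IsAbstractScrambledNet μ b d m t Y) (n : Fin (b ^ m)) :
    ∀ᵐ ω ∂μ, Y n ω ∈ unitCube d :=
  hY.1.mono fun _ h => h.1 n

theorem measure_mem_gridCell (hY : IsAbstractScrambledNet μ b d m t Y) (n : Fin (b ^ m))
    (K : Fin d → Fin (b ^ (m - t))) :
    μ {ω | Y n ω ∈ gridCell _ K} = volume (gridCell _ K) := by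
  rw [hY.2.1 n _ (isBasicCube_gridCell K), volume_gridCell, Nat.cast_pow, ← pow_mul, mul_comm]

variable [IsProbabilityMeasure μ]

theorem measure_biInter_inter_le (hY : IsAbstractScrambledNet μ b d m t Y)
    {J : Finset (Fin (b ^ m))} (hJ : J.Nonempty) {M : Set (Fin d → ℝ)} (hM : MeasurableSet M)
    (K : Fin (b ^ m) → Fin d → Fin (b ^ (m - t))) :
    μ ((⋂ j ∈ J, {ω | Y j ω ∈ gridCell _ (K j)}) ∩ ⋂ j ∈ J, {ω | Y j ω ∈ M}) ≤
      μ (⋂ j ∈ J, {ω | Y j ω ∈ gridCell _ (K j)}) *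
        ∏ j ∈ J, volume (M ∩ gridCell _ (K j)) / volume (gridCell _ (K j)) := by
  by_cases h0 : μ (⋂ j ∈ J, {ω | Y j ω ∈ gridCell _ (K j)}) = 0
  · rw [measure_mono_null inter_subset_left h0]; exact zero_le
  rw [← hY.2.2 M hM J hJ _ (fun j _ => isBasicCube_gridCell (K j)) h0]
  exact measure_inter_le_mul_cond _ _

theorem measure_mem_gridCell_inter_le (hY : IsAbstractScrambledNet μ b d m t Y) (n : Fin (b ^ m))
    {A : Set (Fin d → ℝ)} (hA : MeasurableSet A) (K : Fin d → Fin (b ^ (m - t))) :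
    μ ({ω | Y n ω ∈ gridCell _ K} ∩ {ω | Y n ω ∈ A}) ≤ volume (A ∩ gridCell _ K) := by
  have h := hY.measure_biInter_inter_le (Finset.singleton_nonempty n) hA fun _ => K
  simp only [Finset.set_biInter_singleton, Finset.prod_singleton] at h
  rwa [hY.measure_mem_gridCell, ENNReal.mul_div_cancel' (measure_mono_null inter_subset_right)
    (absurd · (volume_gridCell_ne_top K))] at h

theorem measure_mem_le (hY : IsAbstractScrambledNet μ b d m t Y) (hb : b ≠ 0) (n : Fin (b ^ m))
    {A : Set (Fin d → ℝ)} (hA : MeasurableSet A) :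
    μ {ω | Y n ω ∈ A} ≤ volume (A ∩ unitCube d) :=
  calc μ {ω | Y n ω ∈ A}
      ≤ μ (⋃ K, {ω | Y n ω ∈ gridCell _ K} ∩ {ω | Y n ω ∈ A}) := by
        refine measure_mono_ae ?_
        filter_upwards [hY.ae_mem_unitCube n] with ω hω hωA
        obtain ⟨K, hK⟩ := exists_mem_gridCell (pow_ne_zero (m - t) hb) hω
        exact mem_iUnion.2 ⟨K, hK, hωA⟩
    _ ≤ ∑ K, μ ({ω | Y n ω ∈ gridCell _ K} ∩ {ω | Y n ω ∈ A}) := measure_iUnion_fintype_le _ _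
    _ ≤ ∑ K, volume (A ∩ gridCell _ K) :=
        Finset.sum_le_sum fun K _ => hY.measure_mem_gridCell_inter_le n hA K
    _ = volume (A ∩ unitCube d) := sum_volume_inter_gridCell (pow_ne_zero _ hb) hA

theorem nullMeasurableSet_mem (hY : IsAbstractScrambledNet μ b d m t Y) (hb : b ≠ 0)
    (n : Fin (b ^ m)) {A : Set (Fin d → ℝ)} (hA : MeasurableSet A) :
    NullMeasurableSet {ω | Y n ω ∈ A} μ := by
  refine nullMeasurableSet_of_measure_add_measure_compl_le ?_
  calc μ {ω | Y n ω ∈ A} + μ {ω | Y n ω ∈ Aᶜ}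
      ≤ volume (A ∩ unitCube d) + volume (Aᶜ ∩ unitCube d) :=
        add_le_add (hY.measure_mem_le hb n hA) (hY.measure_mem_le hb n hA.compl)
    _ = μ univ := by
        rw [inter_comm, inter_comm Aᶜ, ← sdiff_eq, measure_inter_add_sdiff _ hA, volume_unitCube,
          measure_univ]

theorem measure_biInter_inter_eq (hY : IsAbstractScrambledNet μ b d m t Y) (hb : b ≠ 0)
    {J : Finset (Fin (b ^ m))} (hJ : J.Nonempty) {M : Set (Fin d → ℝ)} (hM : MeasurableSet M)
    (K : Fin (b ^ m) → Fin d → Fin (b ^ (m - t))) :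
    μ ((⋂ j ∈ J, {ω | Y j ω ∈ gridCell _ (K j)}) ∩ ⋂ j ∈ J, {ω | Y j ω ∈ M}) =
      μ (⋂ j ∈ J, {ω | Y j ω ∈ gridCell _ (K j)}) *
        ∏ j ∈ J, volume (M ∩ gridCell _ (K j)) / volume (gridCell _ (K j)) := by
  by_cases h0 : μ (⋂ j ∈ J, {ω | Y j ω ∈ gridCell _ (K j)}) = 0
  · rw [measure_mono_null inter_subset_left h0, h0, zero_mul]
  rw [← hY.2.2 M hM J hJ _ (fun j _ => isBasicCube_gridCell (K j)) h0]
  exact measure_inter_eq_mul_cond₀ (J.nullMeasurableSet_biInter fun j _ =>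
    hY.nullMeasurableSet_mem hb j (measurableSet_gridCell _)) _

end IsAbstractScrambledNet

theorem IsNet.eq_of_forall_mem_Ico {b d m : ℕ} {x : Fin (b ^ m) → Fin d → ℝ}
    (hx : IsNet b d m 0 x) (ℓ a : Fin d → ℕ) (ha : ∀ i, a i < b ^ ℓ i) (hℓ : ∑ i, ℓ i = m)
    {n n' : Fin (b ^ m)} (hn : ∀ i, x n i ∈ Ico ((a i : ℝ) / b ^ ℓ i) ((a i + 1) / b ^ ℓ i))
    (hn' : ∀ i, x n' i ∈ Ico ((a i : ℝ) / b ^ ℓ i) ((a i + 1) / b ^ ℓ i)) : n = n' := by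
  have hcard := hx.2 _ ⟨ℓ, a, ha, hℓ, rfl⟩
  rw [pow_zero] at hcard
  exact Finset.card_le_one.1 hcard.le n (by simpa using hn) n' (by simpa using hn')

theorem mem_Ico_half_of_two_le {y : Fin 3 → ℝ} {K : Fin 3 → Fin 4} (hy : y ∈ gridCell 4 K)
    {j : Fin 3} (h : 2 ≤ K j) : y j ∈ Ico (1 / 2 : ℝ) 1 := by
  have h2 : (2 : ℝ) ≤ (K j : ℕ) := by exact_mod_cast h
  have h3 : ((K j : ℕ) : ℝ) ≤ 3 := by exact_mod_cast Nat.le_of_lt_succ (K j).isLt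
  obtain ⟨hl, hu⟩ := hy j
  push_cast at hl hu
  constructor <;> linarith

def IsCornerConfig (c : Fin (2 ^ 2) → Fin 3 → Fin 4) : Prop :=
  c 3 = (fun _ => 3) ∧ ∀ i ≠ 3, ∃ j₀, c i j₀ = 2 ∧ ∀ j ≠ j₀, c i j < 2

theorem isCornerConfig_of_injective {c : Fin (2 ^ 2) → Fin 3 → Fin 4} (h3 : c 3 = fun _ => 3)
    (hinj : ∀ j, Function.Injective fun n => c n j)
    (hhalf : ∀ i j j', j ≠ j' → 2 ≤ c i j → 2 ≤ c i j' → i = 3) : IsCornerConfig c := by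
  refine ⟨h3, fun i hi => ?_⟩
  -- `g j` is the point whose `j`-th coordinate lies in `[1/2, 3/4)`; `g` is injective and
  -- avoids `3`, hence is onto `{0, 1, 2}`.
  choose g hg using fun j => Finite.injective_iff_surjective.1 (hinj j) 2
  simp only at hg
  have hg3 : ∀ j, g j ≠ 3 := fun j h => by
    have := hg j
    simp [h, h3] at this
  have hginj : Function.Injective g := fun j j' h => by
    by_contra hjj
    exact hg3 j (hhalf (g j) j j' hjj (hg j).ge (by rw [h]; exact (hg j').ge))
  have himage : Finset.univ.image g = Finset.univ.erase 3 :=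
    Finset.eq_of_subset_of_card_le
      (fun n hn => by
        obtain ⟨j, -, rfl⟩ := Finset.mem_image.1 hn
        exact Finset.mem_erase.2 ⟨hg3 j, Finset.mem_univ _⟩)
      (by rw [Finset.card_image_of_injective _ hginj]; decide)
  obtain ⟨j₀, -, rfl⟩ := Finset.mem_image.1 (himage ▸ Finset.mem_erase.2 ⟨hi, Finset.mem_univ i⟩)
  refine ⟨j₀, hg j₀, fun j hj => ?_⟩
  have hne2 : c (g j₀) j ≠ 2 := fun h => hg3 j₀ (hhalf _ j j₀ hj h.ge (hg j₀).ge)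
  have hne3 : c (g j₀) j ≠ 3 := fun h => hg3 j₀ (hinj j (h.trans (congrFun h3 j).symm))
  omega

section ZeroTwoThreeNet

variable {x : Fin (2 ^ 2) → Fin 3 → ℝ} {c : Fin (2 ^ 2) → Fin 3 → Fin 4}

theorem IsNet.injective_gridCell_index (hx : IsNet 2 3 2 0 x)
    (hc : ∀ n, x n ∈ gridCell 4 (c n)) (j : Fin 3) : Function.Injective fun n => c n j := by
  intro n n' h
  refine hx.eq_of_forall_mem_Ico (Pi.single j 2) (Pi.single j (c n j)) (fun i => ?_) (by simp)
    (fun i => ?_) (fun i => ?_) <;> rcases eq_or_ne i j with rfl | hi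
  · simp
  · simp [hi]
  · simpa [show (2 : ℝ) ^ 2 = 4 by norm_num] using hc n i
  · simpa [hi] using hx.1 n i
  · simpa [h, show (2 : ℝ) ^ 2 = 4 by norm_num] using hc n' i
  · simpa [hi] using hx.1 n' i

theorem IsNet.eq_of_two_le_gridCell_index (hx : IsNet 2 3 2 0 x) (hc : ∀ n, x n ∈ gridCell 4 (c n))
    {j j' : Fin 3} (hjj : j ≠ j') {n n' : Fin (2 ^ 2)} (hn : 2 ≤ c n j) (hn2 : 2 ≤ c n j')
    (hn' : 2 ≤ c n' j) (hn2' : 2 ≤ c n' j') : n = n' := by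
  set ℓ : Fin 3 → ℕ := Pi.single j 1 + Pi.single j' 1
  have key : ∀ n'', 2 ≤ c n'' j → 2 ≤ c n'' j' → ∀ i,
      x n'' i ∈ Ico ((ℓ i : ℝ) / (2 : ℕ) ^ ℓ i) ((ℓ i + 1) / (2 : ℕ) ^ ℓ i) := by
    intro n'' h1 h2 i
    rcases eq_or_ne i j with rfl | hi
    · simpa [ℓ, hjj] using mem_Ico_half_of_two_le (hc n'') h1
    rcases eq_or_ne i j' with rfl | hi'
    · simpa [ℓ, hi] using mem_Ico_half_of_two_le (hc n'') h2
    · simpa [ℓ, hi, hi'] using hx.1 n'' i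
  exact hx.eq_of_forall_mem_Ico ℓ ℓ (fun _ => Nat.lt_two_pow_self)
    (by simp [ℓ, Finset.sum_add_distrib]) (key n hn hn2) (key n' hn' hn2')

theorem IsNet.exists_isCornerConfig (hx : IsNet 2 3 2 0 x)
    (h3 : x 3 ∈ gridCell 4 fun _ => 3) : ∃ c, IsCornerConfig c ∧ ∀ n, x n ∈ gridCell 4 (c n) := by
  choose c hc using fun n => exists_mem_gridCell (q := 4) (by norm_num) (hx.1 n)
  have hc3 : c 3 = fun _ => 3 := eq_of_mem_gridCell (hc 3) h3
  have h23 : ∀ j, 2 ≤ c 3 j := fun j => by simp [hc3]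
  exact ⟨c, isCornerConfig_of_injective hc3 (hx.injective_gridCell_index hc)
    (fun _ _ _ hjj hj hj' => hx.eq_of_two_le_gridCell_index hc hjj hj hj' (h23 _) (h23 _)), hc⟩

end ZeroTwoThreeNet

theorem anchoredBox_eq_pi {d : ℕ} (a : Fin d → ℝ) :
    anchoredBox a = univ.pi fun i => Ico 0 (a i) := by
  ext x; simp [anchoredBox]

theorem measurableSet_anchoredBox {d : ℕ} (a : Fin d → ℝ) : MeasurableSet (anchoredBox a) := by
  rw [anchoredBox_eq_pi]; exact .univ_pi fun _ => measurableSet_Ico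

theorem volume_anchoredBox_const {d : ℕ} {a : ℝ} (ha : 0 ≤ a) :
    volume (anchoredBox fun _ : Fin d => a) = ENNReal.ofReal (a ^ d) := by
  rw [anchoredBox_eq_pi, volume_pi_pi]
  simp [ENNReal.ofReal_pow ha]

def shell (δ : ℝ) : Set (Fin 3 → ℝ) :=
  anchoredBox (fun _ => 1 / 2 + δ) \ anchoredBox (fun _ => 1 / 2)

section Shell

variable {δ : ℝ}

theorem shell_mem_boxDiffs (hδ0 : 0 ≤ δ) (hδ : δ ≤ 1 / 2) : shell δ ∈ boxDiffs 3 :=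
  ⟨_, ⟨_, fun _ => ⟨by norm_num, by norm_num⟩, rfl⟩,
    _, ⟨_, fun _ => ⟨by linarith, by linarith⟩, rfl⟩, rfl⟩

theorem measurableSet_shell (δ : ℝ) : MeasurableSet (shell δ) :=
  (measurableSet_anchoredBox _).diff (measurableSet_anchoredBox _)

theorem volume_shell (hδ0 : 0 ≤ δ) :
    volume (shell δ) = ENNReal.ofReal ((1 / 2 + δ) ^ 3 - (1 / 2) ^ 3) := by
  have hsub : anchoredBox (fun _ : Fin 3 => (1 / 2 : ℝ)) ⊆ anchoredBox fun _ => 1 / 2 + δ :=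
    fun x hx j => ⟨(hx j).1, (hx j).2.trans_le (by linarith)⟩
  rw [shell, measure_sdiff hsub (measurableSet_anchoredBox _).nullMeasurableSet
      (by rw [volume_anchoredBox_const (by norm_num)]; exact ENNReal.ofReal_ne_top),
    volume_anchoredBox_const (by linarith), volume_anchoredBox_const (by norm_num),
    ← ENNReal.ofReal_sub _ (by positivity)]

theorem ofReal_le_volume_shell_inter_gridCell (hδ0 : 0 ≤ δ) (hδ : δ ≤ 1 / 4) {K : Fin 3 → Fin 4}
    {j₀ : Fin 3} (h₀ : K j₀ = 2) (hK : ∀ j ≠ j₀, K j < 2) :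
    ENNReal.ofReal (δ / 16) ≤ volume (shell δ ∩ gridCell 4 K) := by
  set I : Fin 3 → Set ℝ := fun j =>
    if j = j₀ then Ico (1 / 2) (1 / 2 + δ) else Ico ((K j : ℝ) / 4) (((K j : ℝ) + 1) / 4)
  have hsub : univ.pi I ⊆ shell δ ∩ gridCell 4 K := by
    intro x hx
    have hx₀ : x j₀ ∈ Ico (1 / 2) (1 / 2 + δ) := by simpa [I] using hx j₀ trivial
    have hx' : ∀ j ≠ j₀, x j ∈ Ico ((K j : ℝ) / 4) (((K j : ℝ) + 1) / 4) := fun j hj => by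
      simpa [I, hj] using hx j trivial
    have hK' : ∀ j ≠ j₀, ((K j : ℕ) : ℝ) ≤ 1 := fun j hj => by
      exact_mod_cast Nat.le_of_lt_succ (hK j hj)
    refine ⟨⟨fun j => ?_, fun h => (h j₀).2.not_ge hx₀.1⟩, fun j => ?_⟩
    · rcases eq_or_ne j j₀ with rfl | hj
      · exact ⟨by linarith [hx₀.1], hx₀.2⟩
      · obtain ⟨hl, hu⟩ := hx' j hj
        have := hK' j hj
        exact ⟨le_trans (by positivity) hl, by linarith⟩
    · rcases eq_or_ne j j₀ with rfl | hj
      · simp only [h₀, Fin.val_two, Nat.cast_ofNat]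
        exact ⟨by linarith [hx₀.1], by linarith [hx₀.2]⟩
      · simpa using hx' j hj
  have hvol : ∀ j, volume (I j) = if j = j₀ then ENNReal.ofReal δ else ENNReal.ofReal (1 / 4) := by
    intro j
    by_cases hj : j = j₀ <;> simp [I, hj, Real.volume_Ico, ← sub_div]
  refine le_trans (le_of_eq ?_) (measure_mono hsub)
  rw [volume_pi_pi]
  simp [hvol, Finset.prod_ite, Finset.filter_eq', Finset.filter_ne']
  rw [div_eq_mul_inv, ENNReal.ofReal_mul hδ0, ENNReal.ofReal_inv_of_pos (by norm_num),
    ← ENNReal.inv_pow]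
  norm_num

end Shell

local notation "J₃" => Finset.univ.filter (fun n : Fin (2 ^ 2) => (n : ℕ) < 3)

section CornerEvent

variable {Ω : Type*} [MeasurableSpace Ω] {μ : Measure Ω} [IsProbabilityMeasure μ]
  {Y : Fin (2 ^ 2) → Ω → Fin 3 → ℝ} {δ : ℝ}

theorem measure_cornerConfig_mul_le (hY : IsAbstractScrambledNet μ 2 3 2 0 Y) (hδ0 : 0 ≤ δ)
    (hδ : δ ≤ 1 / 4) {c : Fin (2 ^ 2) → Fin 3 → Fin 4} (hc : IsCornerConfig c) :
    μ (⋂ n ∈ Finset.univ, {ω | Y n ω ∈ gridCell 4 (c n)}) * ENNReal.ofReal (64 * δ ^ 3) ≤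
      μ ((⋂ n ∈ Finset.univ, {ω | Y n ω ∈ gridCell 4 (c n)}) ∩
        ⋂ n ∈ J₃, {ω | Y n ω ∈ shell δ}) := by
  obtain ⟨hc3, hcell⟩ := hc
  -- Property (iii) constrains all points by one set `M`; adding the corner cell to the shell
  -- leaves `Y 3` free in its cell while `Y 0, Y 1, Y 2` must lie in the shell.
  set M := shell δ ∪ gridCell 4 fun _ => 3
  have hM : MeasurableSet M := (measurableSet_shell δ).union (measurableSet_gridCell _)
  have hvol_cell : ∀ K : Fin 3 → Fin 4, volume (gridCell 4 K) = 64⁻¹ := fun K => by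
    rw [volume_gridCell]; norm_num
  have hratio : ∀ i ≠ 3,
      ENNReal.ofReal (4 * δ) ≤ volume (M ∩ gridCell 4 (c i)) / volume (gridCell 4 (c i)) := by
    intro i hi
    obtain ⟨j₀, h₀, hK⟩ := hcell i hi
    rw [hvol_cell, ENNReal.le_div_iff_mul_le (by norm_num) (by norm_num)]
    refine le_trans (le_of_eq ?_) ((ofReal_le_volume_shell_inter_gridCell hδ0 hδ h₀ hK).trans
      (measure_mono (inter_subset_inter_left _ subset_union_left)))
    rw [show (64 : ℝ≥0∞)⁻¹ = ENNReal.ofReal 64⁻¹ by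
        rw [ENNReal.ofReal_inv_of_pos (by norm_num), ENNReal.ofReal_ofNat],
      ← ENNReal.ofReal_mul (by positivity)]
    ring_nf
  have hratio3 : volume (M ∩ gridCell 4 (c 3)) / volume (gridCell 4 (c 3)) = 1 := by
    rw [hc3, inter_eq_right.2 subset_union_right, ENNReal.div_self (by simp [hvol_cell])
      (by simp [hvol_cell])]
  have hprod : ENNReal.ofReal (64 * δ ^ 3) ≤
      ∏ n, volume (M ∩ gridCell 4 (c n)) / volume (gridCell 4 (c n)) := by
    erw [Fin.prod_univ_four, hratio3, mul_one,
      show 64 * δ ^ 3 = 4 * δ * (4 * δ) * (4 * δ) by ring,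
      ENNReal.ofReal_mul (by positivity), ENNReal.ofReal_mul (by positivity)]
    gcongr <;> exact hratio _ (by decide)
  have hsub : (⋂ n ∈ Finset.univ, {ω | Y n ω ∈ gridCell 4 (c n)}) ∩
        ⋂ n ∈ Finset.univ, {ω | Y n ω ∈ M} ⊆
      (⋂ n ∈ Finset.univ, {ω | Y n ω ∈ gridCell 4 (c n)}) ∩
        ⋂ n ∈ J₃, {ω | Y n ω ∈ shell δ} := by
    rintro ω ⟨hE, hT⟩
    refine ⟨hE, ?_⟩
    simp only [mem_iInter, Finset.mem_univ, Finset.mem_filter, true_and, forall_const] at hE hT ⊢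
    intro n hn
    obtain ⟨j₀, h₀, -⟩ := hcell n (by rintro rfl; exact absurd hn (by decide))
    refine (hT n).resolve_right fun h => ?_
    have := congrFun (eq_of_mem_gridCell h (hE n)) j₀
    rw [h₀] at this
    exact absurd this (by decide)
  calc _ ≤ μ (⋂ n ∈ Finset.univ, {ω | Y n ω ∈ gridCell 4 (c n)}) *
        ∏ n, volume (M ∩ gridCell 4 (c n)) / volume (gridCell 4 (c n)) := by gcongr
    _ = _ := (hY.measure_biInter_inter_eq two_ne_zero Finset.univ_nonempty hM c).symm
    _ ≤ _ := measure_mono hsub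

theorem ofReal_pow_three_le_measure_shell (hY : IsAbstractScrambledNet μ 2 3 2 0 Y) (hδ0 : 0 ≤ δ)
    (hδ : δ ≤ 1 / 4) : ENNReal.ofReal (δ ^ 3) ≤
      μ (⋂ n ∈ J₃, {ω | Y n ω ∈ shell δ}) := by
  set G := ⋂ n ∈ J₃, {ω | Y n ω ∈ shell δ}
  set E : {c // IsCornerConfig c} → Set Ω :=
    fun c => ⋂ n ∈ Finset.univ, {ω | Y n ω ∈ gridCell 4 (c.1 n)}
  have hE : ∀ c, NullMeasurableSet (E c) μ := fun c => Finset.univ.nullMeasurableSet_biInter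
    fun n _ => hY.nullMeasurableSet_mem two_ne_zero n (measurableSet_gridCell _)
  have hG : NullMeasurableSet G μ := Finset.nullMeasurableSet_biInter _
    fun n _ => hY.nullMeasurableSet_mem two_ne_zero n (measurableSet_shell δ)
  have hcorner : (64 : ℝ≥0∞)⁻¹ ≤ ∑' c, μ (E c) :=
    calc (64 : ℝ≥0∞)⁻¹ = μ {ω | Y 3 ω ∈ gridCell 4 fun _ => 3} :=
          (by rw [volume_gridCell]; norm_num : (64 : ℝ≥0∞)⁻¹ = volume (gridCell 4 fun _ => 3)).trans
            (hY.measure_mem_gridCell 3 _).symm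
      _ ≤ μ (⋃ c, E c) := measure_mono_ae <| by
          filter_upwards [hY.1] with ω hnet h3
          obtain ⟨c, hc, hmem⟩ := hnet.exists_isCornerConfig h3
          exact mem_iUnion.2 ⟨⟨c, hc⟩, mem_iInter₂.2 fun n _ => hmem n⟩
      _ ≤ ∑' c, μ (E c) := measure_iUnion_le E
  have hdisj : ∑' c, μ (E c ∩ G) ≤ μ G := by
    rw [← measure_iUnion₀ ?_ fun c => (hE c).inter hG]
    · exact measure_mono (iUnion_subset fun _ => inter_subset_right)
    · intro c c' hcc'
      obtain ⟨n, hn⟩ := Function.ne_iff.1 (Subtype.coe_ne_coe.2 hcc')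
      exact Disjoint.aedisjoint <| ((disjoint_gridCell hn).preimage (Y n)).mono
        (fun ω hω => mem_iInter₂.1 hω.1 n (Finset.mem_univ n))
        (fun ω hω => mem_iInter₂.1 hω.1 n (Finset.mem_univ n))
  calc ENNReal.ofReal (δ ^ 3) = (64 : ℝ≥0∞)⁻¹ * ENNReal.ofReal (64 * δ ^ 3) := by
        rw [ENNReal.ofReal_mul (by norm_num), ENNReal.ofReal_ofNat, ← mul_assoc,
          ENNReal.inv_mul_cancel (by norm_num) (by norm_num), one_mul]
    _ ≤ (∑' c, μ (E c)) * ENNReal.ofReal (64 * δ ^ 3) := by gcongr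
    _ = ∑' c, μ (E c) * ENNReal.ofReal (64 * δ ^ 3) := ENNReal.tsum_mul_right.symm
    _ ≤ ∑' c, μ (E c ∩ G) :=
        ENNReal.tsum_le_tsum fun c => measure_cornerConfig_mul_le hY hδ0 hδ c.2
    _ ≤ μ G := hdisj

theorem measure_mem_shell_le (hY : IsAbstractScrambledNet μ 2 3 2 0 Y) (hδ0 : 0 ≤ δ)
    (n : Fin (2 ^ 2)) : μ {ω | Y n ω ∈ shell δ} ≤ ENNReal.ofReal ((1 / 2 + δ) ^ 3 - (1 / 2) ^ 3) :=
  (hY.measure_mem_le two_ne_zero n (measurableSet_shell δ)).trans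
    ((measure_mono inter_subset_left).trans_eq (volume_shell hδ0))

end CornerEvent

theorem four_thirds_cube_sub_mul_le {ε δ : ℝ} (hδ0 : 0 < δ) (hδε : δ ≤ ε / 100)
    (hδ1 : δ ≤ 1 / 100) : ((4 / 3) ^ 3 - ε) * ((1 / 2 + δ) ^ 3 - (1 / 2) ^ 3) ^ 3 ≤ δ ^ 3 := by
  -- `(1/2 + δ)^3 - (1/2)^3 = (3δ/4)(1 + u)`
  set u := 2 * δ + 4 * δ ^ 2 / 3
  have hu0 : 0 ≤ u := by positivity
  have hu : u ≤ 3 * δ := by simp only [u]; nlinarith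
  have hu' : u ≤ 3 / 100 := by linarith
  have hcube : (1 + u) ^ 3 ≤ 1 + 4 * u := by
    nlinarith [mul_nonneg hu0 hu0, mul_nonneg (mul_nonneg hu0 hu0) (sub_nonneg.2 hu')]
  have key : ((4 / 3) ^ 3 - ε) * (27 / 64) * (1 + u) ^ 3 ≤ 1 := by
    rcases le_or_gt ε ((4 / 3) ^ 3) with hε | hε
    · nlinarith [mul_le_mul_of_nonneg_left hcube (by linarith : (0 : ℝ) ≤ (4 / 3) ^ 3 - ε)]
    · nlinarith [pow_nonneg (by linarith : (0 : ℝ) ≤ 1 + u) 3]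
  calc ((4 / 3) ^ 3 - ε) * ((1 / 2 + δ) ^ 3 - (1 / 2) ^ 3) ^ 3
      = δ ^ 3 * (((4 / 3) ^ 3 - ε) * (27 / 64) * (1 + u) ^ 3) := by ring
    _ ≤ δ ^ 3 := mul_le_of_le_one_right (by positivity) key

theorem div_le_corrNum {Ω : Type*} [MeasurableSpace Ω] (μ : Measure Ω) {N d : ℕ}
    {𝒮 : Set (Set (Fin d → ℝ))} (X : Fin N → Ω → Fin d → ℝ) {S : Set (Fin d → ℝ)} (hS : S ∈ 𝒮)
    {J : Finset (Fin N)} (hJ : J.Nonempty) :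
    μ (⋂ j ∈ J, {ω | X j ω ∈ S}) / ∏ j ∈ J, μ {ω | X j ω ∈ S} ≤ corrNum μ 𝒮 X :=
  le_iSup₂_of_le S hS (le_iSup₂_of_le J hJ (le_max_left _ _))

theorem exists_mem_boxDiffs_le_div {Ω : Type*} [MeasurableSpace Ω] {μ : Measure Ω}
    [IsProbabilityMeasure μ] {Y : Fin (2 ^ 2) → Ω → Fin 3 → ℝ}
    (hY : IsAbstractScrambledNet μ 2 3 2 0 Y) {ε : ℝ} (hε : 0 < ε) :
    ∃ D ∈ boxDiffs 3, ENNReal.ofReal ((4 / 3) ^ 3 - ε) ≤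
      μ (⋂ n ∈ J₃, {ω | Y n ω ∈ D}) /
        ∏ n ∈ J₃, μ {ω | Y n ω ∈ D} := by
  set δ := min (ε / 100) (1 / 100)
  have hδ0 : 0 < δ := lt_min (by positivity) (by norm_num)
  have hδ1 : δ ≤ 1 / 100 := min_le_right _ _
  refine ⟨shell δ, shell_mem_boxDiffs hδ0.le (by linarith), ?_⟩
  set v := (1 / 2 + δ) ^ 3 - (1 / 2) ^ 3
  have hv : 0 < v := sub_pos.2 (pow_lt_pow_left₀ (by linarith) (by norm_num) (by norm_num))
  have hden : ∏ n ∈ J₃,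
      μ {ω | Y n ω ∈ shell δ} ≤ ENNReal.ofReal (v ^ 3) :=
    calc _ ≤ ∏ _n ∈ J₃, ENNReal.ofReal v :=
          Finset.prod_le_prod' fun n _ => measure_mem_shell_le hY hδ0.le n
      _ = ENNReal.ofReal (v ^ 3) := by rw [Finset.prod_const, ENNReal.ofReal_pow hv.le]; rfl
  calc ENNReal.ofReal ((4 / 3) ^ 3 - ε) ≤ ENNReal.ofReal (δ ^ 3 / v ^ 3) :=
        ENNReal.ofReal_le_ofReal ((le_div_iff₀ (by positivity)).2
          (four_thirds_cube_sub_mul_le hδ0 (min_le_left _ _) hδ1))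
    _ = ENNReal.ofReal (δ ^ 3) / ENNReal.ofReal (v ^ 3) := ENNReal.ofReal_div_of_pos (by positivity)
    _ ≤ _ := ENNReal.div_le_div (ofReal_pow_three_le_measure_shell hY hδ0.le (by linarith)) hden

/-- For an abstract scrambled `(0,2,3)`-net in base `2` and every `ε > 0`
there is `D ∈ D^3_0` with `P(Y_1,Y_2,Y_3 ∈ D)/∏_{i=1}^3 P(Y_i ∈ D) ≥ (4/3)³ - ε`;
in particular `γ_{D^3_0}(Y) ≥ 64/27`. -/
theorem stmt17 {Ω : Type*} [MeasurableSpace Ω] (μ : Measure Ω) [IsProbabilityMeasure μ]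
    (Y : Fin (2 ^ 2) → Ω → Fin 3 → ℝ) (hY : IsAbstractScrambledNet μ 2 3 2 0 Y) :
    (∀ ε : ℝ, 0 < ε → ∃ D ∈ boxDiffs 3,
      ENNReal.ofReal ((4 / 3) ^ 3 - ε) ≤
        μ {ω | ∀ n : Fin (2 ^ 2), (n : ℕ) < 3 → Y n ω ∈ D} /
          ∏ n ∈ Finset.univ.filter (fun n : Fin (2 ^ 2) => (n : ℕ) < 3),
            μ {ω | Y n ω ∈ D}) ∧
    (64 / 27 : ℝ≥0∞) ≤ corrNum μ (boxDiffs 3) Y := by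
  have hJ : ∀ D : Set (Fin 3 → ℝ), {ω | ∀ n : Fin (2 ^ 2), (n : ℕ) < 3 → Y n ω ∈ D} =
      ⋂ n ∈ J₃, {ω | Y n ω ∈ D} := by
    intro D; ext ω; simp
  refine ⟨fun ε hε => by simpa only [hJ] using exists_mem_boxDiffs_le_div hY hε, ?_⟩
  refine le_of_forall_lt_imp_le_of_dense fun c hc => ?_
  have h6427 : (64 / 27 : ℝ≥0∞) = ENNReal.ofReal (64 / 27) := by
    rw [ENNReal.ofReal_div_of_pos (by norm_num)]; norm_num
  have hc' : c.toReal < 64 / 27 := ENNReal.toReal_lt_of_lt_ofReal (h6427 ▸ hc)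
  obtain ⟨D, hD, hratio⟩ := exists_mem_boxDiffs_le_div hY (sub_pos.2 hc')
  calc c = ENNReal.ofReal ((4 / 3) ^ 3 - (64 / 27 - c.toReal)) := by
        rw [show (4 / 3 : ℝ) ^ 3 - (64 / 27 - c.toReal) = c.toReal by norm_num,
          ENNReal.ofReal_toReal hc.ne_top]
    _ ≤ _ := hratio
    _ ≤ _ := div_le_corrNum μ Y hD ⟨0, by decide⟩

end LHSPaper
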